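/- arXiv:2504.15039 — 6 statements merged into one kernel-verified Lean document; each statement's English description precedes it below -/
import Mathlib

section
/- Let A and D be positive integers, i a nonnegative integer, and k an integer such that the residual Δ = k·A − i·D satisfies 0 < Δ < A. Then k ≥ 1, and: if |Δ − A| < |Δ| then k − 1 is a skew-compensated clock of i (i.e., |(k−1)·A − i·D| ≤ |m·A − i·D| for every nonnegative integer m), while if |Δ − A| ≥ |Δ| then k is a skew-compensated clock of i (i.e., |k·A − i·D| ≤ |m·A − i·D| for every nonnegative integer m). -/
/-! Every `m ≥ k` has residual `m·A − x ≥ Δ`, and every `m ≤ k − 1` has residual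
`m·A − x ≤ Δ − A < 0`, so no multiple of `A` is closer to `x` than the nearer of
`k·A` and `(k − 1)·A`. -/

theorem min_abs_residual_le_abs_residual {A x k : ℤ} (hA : 0 ≤ A) (hΔ : 0 ≤ k * A - x)
    (hΔA : k * A - x ≤ A) (m : ℤ) :
    min |k * A - x| |k * A - x - A| ≤ |m * A - x| := by
  rcases le_or_gt k m with hkm | hmk
  · have hmul : k * A ≤ m * A := mul_le_mul_of_nonneg_right hkm hA
    calc min |k * A - x| |k * A - x - A| ≤ |k * A - x| := min_le_left _ _
      _ = k * A - x := abs_of_nonneg hΔ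
      _ ≤ m * A - x := by linarith
      _ ≤ |m * A - x| := le_abs_self _
  · have hmul : m * A ≤ (k - 1) * A := mul_le_mul_of_nonneg_right (by omega) hA
    calc min |k * A - x| |k * A - x - A| ≤ |k * A - x - A| := min_le_right _ _
      _ = -(k * A - x - A) := abs_of_nonpos (by linarith)
      _ ≤ -(m * A - x) := by linarith
      _ ≤ |m * A - x| := neg_le_abs _

/-- If the residual `Δ = k·A - i·D` satisfies `0 < Δ < A`, then
`k ≥ 1`; if `|Δ - A| < |Δ|` then `k - 1` is a skew-compensated clock of `i`,
and if `|Δ - A| ≥ |Δ|` then `k` is a skew-compensated clock of `i`. -/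
theorem scc_case_pos_residual (A D i k : ℤ) (hA : 0 < A) (hD : 0 < D)
    (hi : 0 ≤ i) (hk1 : 0 < k * A - i * D) (hk2 : k * A - i * D < A) :
    1 ≤ k ∧
    (|(k * A - i * D) - A| < |k * A - i * D| →
      ∀ m : ℤ, 0 ≤ m → |(k - 1) * A - i * D| ≤ |m * A - i * D|) ∧
    (|k * A - i * D| ≤ |(k * A - i * D) - A| →
      ∀ m : ℤ, 0 ≤ m → |k * A - i * D| ≤ |m * A - i * D|) := by
  have hkA : 0 < k * A := by nlinarith [mul_nonneg hi hD.le]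
  have hclosest := min_abs_residual_le_abs_residual hA.le hk1.le hk2.le
  refine ⟨pos_of_mul_pos_left hkA hA.le, fun h m _ => ?_, fun h m _ => ?_⟩
  · rw [show (k - 1) * A - i * D = k * A - i * D - A by ring, ← min_eq_right h.le]
    exact hclosest m
  · rw [← min_eq_left h]
    exact hclosest m
end

section
/- Let A and D be positive integers, i a nonnegative integer, and k an integer such that the residual Δ = k·A − i·D satisfies −A < Δ < 0. Then k ≥ 0, and: if |Δ + A| < |Δ| then k + 1 is a skew-compensated clock of i (i.e., |(k+1)·A − i·D| ≤ |m·A − i·D| for every nonnegative integer m), while if |Δ + A| ≥ |Δ| then k is a skew-compensated clock of i (i.e., |k·A − i·D| ≤ |m·A − i·D| for every nonnegative integer m). -/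
/-! The hypothesis on the residual says that `i * D` lies strictly between the consecutive
multiples `k * A` and `(k + 1) * A`, so every multiple of `A` is at least as far from `i * D`
as the nearer of these two. -/

namespace Int

variable {A x k m : ℤ}

theorem abs_mul_sub_le_of_le_of_mul_le (hA : 0 ≤ A) (hmk : m ≤ k) (hk : k * A ≤ x) :
    |k * A - x| ≤ |m * A - x| := by
  have : m * A ≤ k * A := mul_le_mul_of_nonneg_right hmk hA
  rw [abs_of_nonpos (by linarith), abs_of_nonpos (by linarith)]
  linarith

theorem abs_mul_sub_le_of_le_of_le_mul (hA : 0 ≤ A) (hkm : k ≤ m) (hk : x ≤ k * A) :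
    |k * A - x| ≤ |m * A - x| := by
  have : k * A ≤ m * A := mul_le_mul_of_nonneg_right hkm hA
  rw [abs_of_nonneg (by linarith), abs_of_nonneg (by linarith)]
  linarith

theorem min_abs_mul_sub_le (hA : 0 ≤ A) (hlo : k * A ≤ x) (hhi : x ≤ (k + 1) * A) (m : ℤ) :
    min |k * A - x| |(k + 1) * A - x| ≤ |m * A - x| := by
  rcases le_or_gt m k with hmk | hkm
  · exact min_le_of_left_le (abs_mul_sub_le_of_le_of_mul_le hA hmk hlo)
  · exact min_le_of_right_le (abs_mul_sub_le_of_le_of_le_mul hA hkm hhi)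

theorem nonneg_of_neg_lt_mul_sub (hA : 0 < A) (hx : 0 ≤ x) (h : -A < k * A - x) : 0 ≤ k := by
  have : -1 < k := lt_of_mul_lt_mul_right (by linarith) hA.le
  omega

end Int

/-- If the residual `Δ = k·A - i·D` satisfies `-A < Δ < 0`, then
`k ≥ 0`; if `|Δ + A| < |Δ|` then `k + 1` is a skew-compensated clock of `i`,
and if `|Δ + A| ≥ |Δ|` then `k` is a skew-compensated clock of `i`. -/
theorem scc_case_neg_residual (A D i k : ℤ) (hA : 0 < A) (hD : 0 < D)
    (hi : 0 ≤ i) (hk1 : -A < k * A - i * D) (hk2 : k * A - i * D < 0) :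
    0 ≤ k ∧
    (|(k * A - i * D) + A| < |k * A - i * D| →
      ∀ m : ℤ, 0 ≤ m → |(k + 1) * A - i * D| ≤ |m * A - i * D|) ∧
    (|k * A - i * D| ≤ |(k * A - i * D) + A| →
      ∀ m : ℤ, 0 ≤ m → |k * A - i * D| ≤ |m * A - i * D|) := by
  have hshift : (k + 1) * A - i * D = k * A - i * D + A := by ring
  have hclosest (m : ℤ) : min |k * A - i * D| |k * A - i * D + A| ≤ |m * A - i * D| :=
    hshift ▸ Int.min_abs_mul_sub_le hA.le (by linarith) (by linarith) m
  refine ⟨Int.nonneg_of_neg_lt_mul_sub hA (mul_nonneg hi hD.le) hk1, fun h m _ => ?_,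
    fun h m _ => ?_⟩
  · simpa only [hshift, min_eq_right h.le] using hclosest m
  · simpa only [min_eq_left h] using hclosest m
end

section
/- Let A and D be positive integers and i a nonnegative integer. Then there exists a skew-compensated clock of i, and moreover every skew-compensated clock of i equals either ⌊i·D/A⌋ or ⌈i·D/A⌉ (floor and ceiling of the rational number i·D/A). -/
/-- A skew-compensated clock of `i` exists, and every
skew-compensated clock of `i` equals `⌊i·D/A⌋` or `⌈i·D/A⌉`. -/
theorem scc_exists_and_eq_floor_or_ceil (A D i : ℤ) (hA : 0 < A) (hD : 0 < D)
    (hi : 0 ≤ i) :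
    (∃ j : ℤ, 0 ≤ j ∧ ∀ m : ℤ, 0 ≤ m → |j * A - i * D| ≤ |m * A - i * D|) ∧
    (∀ j : ℤ, 0 ≤ j → (∀ m : ℤ, 0 ≤ m → |j * A - i * D| ≤ |m * A - i * D|) →
      j = ⌊(i : ℚ) * (D : ℚ) / (A : ℚ)⌋ ∨ j = ⌈(i : ℚ) * (D : ℚ) / (A : ℚ)⌉) := by
  set N : ℤ := i * D with hNdef
  have hN0 : 0 ≤ N := mul_nonneg hi hD.le
  set q : ℤ := N / A with hqdef
  set r : ℤ := N % A with hrdef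
  have hr0 : 0 ≤ r := Int.emod_nonneg N hA.ne'
  have hrA : r < A := Int.emod_lt_of_pos N hA
  have hqr : A * q + r = N := Int.mul_ediv_add_emod N A
  have hq0 : 0 ≤ q := Int.ediv_nonneg hN0 hA.le
  -- error bounds for arbitrary m
  have key : ∀ m : ℤ, (m ≤ q → N - m * A = |m * A - N| ∧ r ≤ |m * A - N|) ∧
      (q + 1 ≤ m → m * A - N = |m * A - N| ∧ A - r ≤ |m * A - N|) := by
    intro m
    constructor
    · intro hm
      have h1 : m * A ≤ N := by nlinarith [mul_le_mul_of_nonneg_right hm hA.le]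
      have : |m * A - N| = N - m * A := by rw [abs_sub_comm]; exact abs_of_nonneg (by linarith)
      constructor
      · omega
      · rw [this]; nlinarith [mul_le_mul_of_nonneg_right hm hA.le]
    · intro hm
      have h1 : N + (A - r) ≤ m * A := by nlinarith [mul_le_mul_of_nonneg_right hm hA.le]
      have : |m * A - N| = m * A - N := abs_of_nonneg (by linarith)
      constructor
      · omega
      · rw [this]; linarith
  have habsq : |q * A - N| = r := by
    rw [abs_sub_comm]; rw [abs_of_nonneg (by linarith)]; linarith [((key q).1 le_rfl).1]
  have habsq1 : |(q + 1) * A - N| = A - r := by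
    rw [abs_of_nonneg (by nlinarith)]; nlinarith
  have hfloor : ⌊(i : ℚ) * (D : ℚ) / (A : ℚ)⌋ = q := by
    have : (i : ℚ) * (D : ℚ) / (A : ℚ) = (N : ℚ) / (A : ℚ) := by
      push_cast [hNdef]; ring
    have hAq : (0 : ℚ) < (A : ℚ) := by exact_mod_cast hA
    have hz1 : (A : ℚ) * q ≤ N := by exact_mod_cast show A * q ≤ N by omega
    have hz2 : (N : ℚ) < A * q + A := by exact_mod_cast show N < A * q + A by omega
    rw [this, Int.floor_eq_iff]
    constructor
    · rw [le_div_iff₀ hAq]; nlinarith [hz1]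
    · rw [div_lt_iff₀ hAq]; nlinarith [hz2]
  constructor
  · refine ⟨if 2 * r ≤ A then q else q + 1, ?_, ?_⟩
    · split <;> omega
    · intro m _
      have hb : |(if 2 * r ≤ A then q else q + 1) * A - N| ≤ min r (A - r) := by
        split
        · rw [habsq]; omega
        · rw [habsq1]; omega
      rcases le_or_gt m q with hm | hm
      · exact le_trans (hb.trans (min_le_left _ _)) ((key m).1 hm).2
      · exact (hb.trans (min_le_right _ _)).trans ((key m).2 hm).2
  · intro j _ hmin
    have h1 : |j * A - N| ≤ r := habsq ▸ hmin q hq0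
    have h2 : |j * A - N| ≤ A - r := habsq1 ▸ hmin (q + 1) (by omega)
    have hjq : j = q ∨ j = q + 1 := by
      by_contra h
      push_neg at h
      rcases le_or_gt j q with hj | hj
      · have hj' : j ≤ q - 1 := by omega
        have := ((key j).1 (by omega)).1
        have hle : j * A ≤ (q - 1) * A := mul_le_mul_of_nonneg_right hj' hA.le
        nlinarith
      · have hj' : q + 2 ≤ j := by omega
        have := ((key j).2 (by omega)).1
        have hle : (q + 2) * A ≤ j * A := mul_le_mul_of_nonneg_right hj' hA.le
        nlinarith
    rcases hjq with rfl | rfl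
    · left; omega
    · right
      have hrpos : 0 < r := by
        by_contra hr
        push_neg at hr
        have : r = 0 := le_antisymm hr hr0
        rw [habsq1] at h1
        omega
      have hceil : ⌈(i : ℚ) * (D : ℚ) / (A : ℚ)⌉ = q + 1 := by
        have hx : (i : ℚ) * (D : ℚ) / (A : ℚ) = (N : ℚ) / (A : ℚ) := by
          push_cast [hNdef]; ring
        rw [hx]
        have hAq : (0 : ℚ) < (A : ℚ) := by exact_mod_cast hA
        have hz1 : (A : ℚ) * q < N := by exact_mod_cast show A * q < N by omega
        have hz2 : (N : ℚ) ≤ A * q + A := by exact_mod_cast show N ≤ A * q + A by omega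
        rw [Int.ceil_eq_iff]
        constructor
        · rw [lt_div_iff₀ hAq]; push_cast; nlinarith [hz1]
        · rw [div_le_iff₀ hAq]; push_cast; nlinarith [hz2]
      omega
end

section
/- Let A and D be positive integers and i a nonnegative integer. A nonnegative integer j is a skew-compensated clock of i (i.e., |j·A − i·D| ≤ |m·A − i·D| for every nonnegative integer m) if and only if 2·|j·A − i·D| ≤ A. -/
/-!
Write `e = j·A - i·D`, so that `m·A - i·D = e + (m - j)·A`. If `2|e| ≤ A`, every shift of `e` by a
nonzero multiple of `A` has absolute value at least `A - |e| ≥ |e|`. Conversely, comparing `e` with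
its neighbours `e ± A` (the one on the side of `0`, which corresponds to a nonnegative clock since
`i·D ≥ 0`) forces `2|e| ≤ A`.
-/

lemma two_mul_le_of_le_abs_sub {α : Type*} [CommRing α] [LinearOrder α] [IsStrictOrderedRing α]
    {e A : α} (hA : 0 < A) (h : e ≤ |e - A|) : 2 * e ≤ A := by
  rcases abs_cases (e - A) with ⟨habs, _⟩ | ⟨habs, _⟩ <;> rw [habs] at h <;> linarith

lemma abs_le_abs_add_mul_of_two_mul_abs_le {e A : ℤ} (h : 2 * |e| ≤ A) (k : ℤ) :
    |e| ≤ |e + k * A| := by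
  rcases eq_or_ne k 0 with rfl | hk
  · simp
  have hA : A ≤ |k * A| := by
    rw [abs_mul]
    exact (le_abs_self A).trans (le_mul_of_one_le_left (abs_nonneg A) (Int.one_le_abs hk))
  linarith [abs_add' (k * A) e]

/-- A nonnegative integer `j` is a skew-compensated clock of `i`
iff `2·|j·A - i·D| ≤ A`. -/
theorem scc_iff_two_abs_le (A D i j : ℤ) (hA : 0 < A) (hD : 0 < D)
    (hi : 0 ≤ i) (hj : 0 ≤ j) :
    (∀ m : ℤ, 0 ≤ m → |j * A - i * D| ≤ |m * A - i * D|) ↔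
    2 * |j * A - i * D| ≤ A := by
  constructor
  · intro h
    rcases le_or_gt (j * A - i * D) 0 with hle | hpos
    · have hnext := h (j + 1) (by omega)
      rw [abs_of_nonpos hle, show (j + 1) * A - i * D = -(-(j * A - i * D) - A) by ring,
        abs_neg] at hnext
      rw [abs_of_nonpos hle]
      exact two_mul_le_of_le_abs_sub hA hnext
    · have hj_pos : 0 < j := pos_of_mul_pos_left (by linarith [mul_nonneg hi hD.le]) hA.le
      have hprev := h (j - 1) (by omega)
      rw [abs_of_pos hpos, show (j - 1) * A - i * D = j * A - i * D - A by ring] at hprev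
      rw [abs_of_pos hpos]
      exact two_mul_le_of_le_abs_sub hA hprev
  · intro h m _
    rw [show m * A - i * D = (j * A - i * D) + (m - j) * A by ring]
    exact abs_le_abs_add_mul_of_two_mul_abs_le h _
end

section
/- Let A and D be positive integers with D > A, and let i be a nonnegative integer. If j̄ is a nonnegative integer satisfying |j̄·A − i·(D−A)| ≤ |m·A − i·(D−A)| for every nonnegative integer m, then i + j̄ is a skew-compensated clock of i with respect to the ratio D/A, i.e., |(i+j̄)·A − i·D| ≤ |m·A − i·D| for every nonnegative integer m. -/
/-- If `D > A` and `j̄` is a skew-compensated clock of `i` with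
respect to the ratio `(D-A)/A`, then `i + j̄` is a skew-compensated clock of `i`
with respect to `D/A`. -/
theorem scc_decomposition (A D i jbar : ℤ) (hA : 0 < A) (hD : 0 < D)
    (hDA : A < D) (hi : 0 ≤ i) (hjbar : 0 ≤ jbar)
    (hscc : ∀ m : ℤ, 0 ≤ m → |jbar * A - i * (D - A)| ≤ |m * A - i * (D - A)|) :
    0 ≤ i + jbar ∧
    ∀ m : ℤ, 0 ≤ m → |(i + jbar) * A - i * D| ≤ |m * A - i * D| := by
  refine ⟨by linarith, fun m hm => ?_⟩
  have key : (i + jbar) * A - i * D = jbar * A - i * (D - A) := by ring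
  rw [key]
  rcases le_or_gt i m with h | h
  · have := hscc (m - i) (by linarith)
    have e : (m - i) * A - i * (D - A) = m * A - i * D := by ring
    rwa [e] at this
  · have h0 := hscc 0 (le_refl 0)
    have e0 : (0 : ℤ) * A - i * (D - A) = -(i * (D - A)) := by ring
    rw [e0, abs_neg] at h0
    have hpos : 0 ≤ i * (D - A) := mul_nonneg hi (by linarith)
    rw [abs_of_nonneg hpos] at h0
    have hm' : m + 1 ≤ i := h
    have hmA : m * A ≤ i * A - A := by nlinarith
    have : i * (D - A) ≤ |m * A - i * D| := by
      rw [abs_of_nonpos (by nlinarith)]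
      nlinarith
    linarith
end

section
/- Let A and D be positive integers, i a nonnegative integer, and k any integer. If j is a skew-compensated clock of i (a nonnegative integer with |j·A − i·D| ≤ |m·A − i·D| for every nonnegative integer m), then |j − k| ≤ ⌈|k·A − i·D| / A⌉, where the ceiling is of the rational number |k·A − i·D|/A; in particular, starting the direct search from any integer k reaches a skew-compensated clock within ⌈|k·A − i·D|/A⌉ unit steps. -/
/-! The floor quotient `i·D / A` is an admissible candidate with residual of absolute value
below `A`, so a skew-compensated clock `j` has `|j·A − i·D| < A`. Since `(j − k)·A` is the
difference of the residuals of `j` and `k`, the triangle inequality gives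
`(|j − k| − 1)·A < |k·A − i·D|`, which is the ceiling bound. -/

theorem Int.abs_ediv_mul_sub_lt (x : ℤ) {A : ℤ} (hA : 0 < A) : |x / A * A - x| < A := by
  have hres : x / A * A - x = -(x % A) := by rw [Int.emod_def]; ring
  rw [hres, abs_neg, abs_of_nonneg (Int.emod_nonneg x hA.ne')]
  exact Int.emod_lt_of_pos x hA

theorem Int.sub_one_mul_lt_abs_mul_sub {A x j : ℤ} (k : ℤ) (hj : |j * A - x| < A) (hA : 0 < A) :
    (|j - k| - 1) * A < |k * A - x| := by
  have htri : |j - k| * A ≤ |j * A - x| + |k * A - x| := by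
    calc |j - k| * A = |(j - k) * A| := by rw [abs_mul, abs_of_pos hA]
      _ = |(j * A - x) - (k * A - x)| := by congr 1; ring
      _ ≤ |j * A - x| + |k * A - x| := abs_sub _ _
  linarith

theorem scc_dist_from_start_general (A D i k j : ℤ) (hA : 0 < A) (hD : 0 < D)
    (hi : 0 ≤ i)
    (hscc : ∀ m : ℤ, 0 ≤ m → |j * A - i * D| ≤ |m * A - i * D|) :
    |j - k| ≤ ⌈(|k * A - i * D| : ℚ) / (A : ℚ)⌉ := by
  have hquot : 0 ≤ i * D / A := Int.ediv_nonneg (by positivity) hA.le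
  have hj : |j * A - i * D| < A :=
    (hscc _ hquot).trans_lt (Int.abs_ediv_mul_sub_lt (i * D) hA)
  rw [Int.le_ceil_iff, lt_div_iff₀ (by exact_mod_cast hA)]
  exact_mod_cast Int.sub_one_mul_lt_abs_mul_sub k hj hA

/-- If `j` is a skew-compensated clock of `i`, then for any
integer `k`, `|j - k| ≤ ⌈|k·A - i·D| / A⌉` (ceiling of the rational). -/
theorem scc_dist_from_start (A D i k j : ℤ) (hA : 0 < A) (hD : 0 < D)
    (hi : 0 ≤ i) (hj : 0 ≤ j)
    (hscc : ∀ m : ℤ, 0 ≤ m → |j * A - i * D| ≤ |m * A - i * D|) :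
    |j - k| ≤ ⌈(|k * A - i * D| : ℚ) / (A : ℚ)⌉ :=
  scc_dist_from_start_general A D i k j hA hD hi hscc
end
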